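/- arXiv:2302.09037 — 3 statements merged into one kernel-verified Lean document; each statement's English description precedes it below -/
import Mathlib

section
/- Let M be a smooth manifold, ω' a closed 2-form and τ' a closed 1-form on M, and let pr: ℝ × M → M the projection and u the coordinate on ℝ. Then (M, τ', ω') is a cosymplectic manifold if and only if (ℝ × M, ω̃ = pr*ω' + du ∧ pr*τ') is a symplectic manifold. -/
/-!
At a point, `ω̃` has radical `{(a, v) | τ v = 0 ∧ ω v + a τ = 0}`. A vector with `a = 0` lies in
`ker τ ∩ ker ω`, and one with `a ≠ 0` exhibits `τ` in the range of `ω`; conversely `ω v = τ`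
forces `τ v = ω v v = 0`, so `(1, -v)` is in the radical. Hence `ω̃` is nondegenerate iff
`ker τ ∩ ker ω = 0` and `τ ∉ range ω`. Since `ω` is alternating, `range ω` is the annihilator of
`ker ω`, so `τ ∉ range ω` says that `τ` is nonzero on `ker ω`; as `ker τ` is a hyperplane, this
means `τ ≠ 0` and `ker τ + ker ω = V`.
-/

namespace LinearMap

variable {K V : Type*} [Field K] [AddCommGroup V] [Module K V]

theorem IsAlt.range_eq_dualAnnihilator_ker [FiniteDimensional K V]
    {ω : V →ₗ[K] V →ₗ[K] K} (hω : ω.IsAlt) :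
    range ω = (ker ω).dualAnnihilator := by
  have hflip : ω.flip = -ω := ext₂ fun v w => (hω.neg v w).symm
  rw [dualAnnihilator_ker_eq_range_flip, hflip, range_neg]

theorem codisjoint_ker_iff_exists_apply_ne_zero {τ : V →ₗ[K] K} (hτ : τ ≠ 0)
    {W : Submodule K V} : Codisjoint (ker τ) W ↔ ∃ w ∈ W, τ w ≠ 0 := by
  rw [← (isCoatom_ker_of_surjective (surjective_of_ne_zero hτ)).not_le_iff_codisjoint,
    SetLike.not_le_iff_exists]
  simp only [mem_ker]

theorem IsAlt.ne_zero_and_codisjoint_ker_iff_notMem_range [FiniteDimensional K V]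
    {ω : V →ₗ[K] V →ₗ[K] K} (hω : ω.IsAlt) (τ : V →ₗ[K] K) :
    τ ≠ 0 ∧ Codisjoint (ker τ) (ker ω) ↔ τ ∉ range ω := by
  rw [hω.range_eq_dualAnnihilator_ker, Submodule.mem_dualAnnihilator]
  push Not
  constructor
  · rintro ⟨hτ, hcod⟩
    exact (codisjoint_ker_iff_exists_apply_ne_zero hτ).mp hcod
  · rintro ⟨w, hw, hτw⟩
    have hτ : τ ≠ 0 := fun h => hτw (by rw [h, zero_apply])
    exact ⟨hτ, (codisjoint_ker_iff_exists_apply_ne_zero hτ).mpr ⟨w, hw, hτw⟩⟩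

end LinearMap

section ProductForm

open LinearMap

variable {K V : Type*} [Field K] [AddCommGroup V] [Module K V]

/-- The fibre of `pr* ω + du ∧ pr* τ` over a point of `M`. -/
def productForm (ω : V →ₗ[K] V →ₗ[K] K) (τ : V →ₗ[K] K) (p q : K × V) : K :=
  ω p.2 q.2 + p.1 * τ q.2 - q.1 * τ p.2

theorem forall_productForm_eq_zero_iff (ω : V →ₗ[K] V →ₗ[K] K) (τ : V →ₗ[K] K) (p : K × V) :
    (∀ q, productForm ω τ p q = 0) ↔ τ p.2 = 0 ∧ ω p.2 + p.1 • τ = 0 := by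
  obtain ⟨a, v⟩ := p
  simp only [productForm]
  constructor
  · intro h
    have hτv : τ v = 0 := by simpa using h (1, 0)
    refine ⟨hτv, ext fun w => ?_⟩
    simpa [hτv] using h (0, w)
  · rintro ⟨hτv, hωv⟩ ⟨b, w⟩
    simpa [hτv] using congr($hωv w)

theorem LinearMap.IsAlt.productForm_nondegenerate_iff {ω : V →ₗ[K] V →ₗ[K] K} (hω : ω.IsAlt)
    (τ : V →ₗ[K] K) :
    (∀ p, (∀ q, productForm ω τ p q = 0) → p = 0) ↔
      Disjoint (ker τ) (ker ω) ∧ τ ∉ range ω := by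
  simp only [forall_productForm_eq_zero_iff, Prod.forall, Prod.mk_eq_zero]
  constructor
  · intro h
    refine ⟨Submodule.disjoint_def.mpr fun v hτv hωv => (h 0 v ⟨hτv, ?_⟩).2, ?_⟩
    · rw [mem_ker.mp hωv, zero_smul, add_zero]
    · rintro ⟨v, rfl⟩
      have hvv : ω v v = 0 := hω v
      exact one_ne_zero (h 1 (-v) ⟨by simpa using hvv, by simp⟩).1
  · rintro ⟨hdisj, hτ⟩ a v ⟨hτv, hωv⟩
    have ha : a = 0 := by
      by_contra ha
      refine hτ ⟨-a⁻¹ • v, ?_⟩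
      rw [map_smul, eq_neg_of_add_eq_zero_left hωv, smul_neg, neg_smul, neg_neg, smul_smul,
        inv_mul_cancel₀ ha, one_smul]
    subst ha
    rw [zero_smul, add_zero] at hωv
    exact ⟨rfl, Submodule.disjoint_def.mp hdisj v hτv hωv⟩

theorem LinearMap.IsAlt.cosymplectic_iff_productForm_nondegenerate [FiniteDimensional K V]
    {ω : V →ₗ[K] V →ₗ[K] K} (hω : ω.IsAlt) (τ : V →ₗ[K] K) :
    (τ ≠ 0 ∧ IsCompl (ker τ) (ker ω)) ↔ ∀ p, (∀ q, productForm ω τ p q = 0) → p = 0 := by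
  rw [hω.productForm_nondegenerate_iff, ← hω.ne_zero_and_codisjoint_ker_iff_notMem_range,
    isCompl_iff]
  tauto

end ProductForm

/-- Let `M` be a smooth manifold with a 2-form `ω'` and a 1-form
`τ'` (both closed; encoded fiberwise with `ω' x` alternating), and consider on
`ℝ × M` the 2-form `ω̃ = pr*ω' + du ∧ pr*τ'`, i.e. fiberwise
`ω̃((a,v),(b,w)) = ω'(v,w) + a τ'(w) − b τ'(v)`. Then `(M, τ', ω')` is a
cosymplectic manifold (i.e. `τ' x ≠ 0` and `ker τ'_x ⊕ ker ω'_x = T_x M` at every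
point) if and only if `(ℝ × M, ω̃)` is a symplectic manifold (i.e. `ω̃` is
nondegenerate at every point). -/
theorem cosymplectic_iff_product_symplectic
    {M V : Type*} [AddCommGroup V] [Module ℝ V] [FiniteDimensional ℝ V]
    (ω : M → V →ₗ[ℝ] V →ₗ[ℝ] ℝ) (τ : M → V →ₗ[ℝ] ℝ)
    (halt : ∀ x v, ω x v v = 0) :
    (∀ x, τ x ≠ 0 ∧ IsCompl (LinearMap.ker (τ x)) (LinearMap.ker (ω x)))
      ↔ (∀ (x : M) (p : ℝ × V),
          (∀ q : ℝ × V, ω x p.2 q.2 + p.1 * τ x q.2 - q.1 * τ x p.2 = 0)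
            → p = 0) :=
  forall_congr' fun x =>
    LinearMap.IsAlt.cosymplectic_iff_productForm_nondegenerate (halt x) (τ x)
end

section
/- Let (M, τ, ω) be a k-polycosymplectic manifold and define ω̃ = pr_M*ω + du ∧̄ pr_M*τ on ℝᵏ × M, where ∧̄ is the componentwise exterior product, du = du^α ⊗ e_α, and pr_M: ℝᵏ × M → M is the projection. Then ω̃ is a k-polysymplectic form, i.e. it is closed and ∩_{α=1}^k ker ω̃^α = 0. -/
/-!
For `(a, v)` in `⋂_α ker ω̃^α`, the test vectors `(e_α, 0)` show that `τ^α(v) = 0` for every `α`,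
and the test vectors `(0, w)` give `ω^α(v, w) + a^α τ^α(w) = 0`. Since `⋂_α ker ω^α` has
dimension `k` and meets `⋂_α ker τ^α` trivially, `τ` maps it isomorphically onto `ℝᵏ`, so it
contains Reeb-type vectors `R_α` with `τ^β(R_α) = δ_α^β`. Testing against `w = R_α` forces
`a^α = 0`, after which `v` lies in `⋂_α ker ω^α ∩ ⋂_α ker τ^α = 0`.
-/

section

open Module LinearMap

variable {𝕜 V ι : Type*} [Field 𝕜] [AddCommGroup V] [Module 𝕜 V]

theorem surjective_pi_domRestrict_of_inf_iInf_ker_eq_bot [Fintype ι] {K : Submodule 𝕜 V}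
    [FiniteDimensional 𝕜 K] (τ : ι → V →ₗ[𝕜] 𝕜) (hrank : finrank 𝕜 K = Fintype.card ι)
    (hker : K ⊓ ⨅ i, ker (τ i) = ⊥) :
    Function.Surjective (pi fun i => (τ i).domRestrict K) := by
  refine (injective_iff_surjective_of_finrank_eq_finrank (by simpa using hrank)).mp ?_
  change Function.Injective ((pi τ).domRestrict K)
  rw [injective_domRestrict_iff, ker_pi, disjoint_iff]
  exact hker

/-- The component `ω̃^i = pr_V*ω^i + du^i ∧ pr_V*τ^i` on `𝕜^ι × V`. -/
def extendedForm (ω : ι → V →ₗ[𝕜] V →ₗ[𝕜] 𝕜) (τ : ι → V →ₗ[𝕜] 𝕜) (i : ι)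
    (p q : (ι → 𝕜) × V) : 𝕜 :=
  ω i p.2 q.2 + p.1 i * τ i q.2 - q.1 i * τ i p.2

theorem eq_zero_of_forall_extendedForm_eq_zero [Fintype ι] [FiniteDimensional 𝕜 V]
    (ω : ι → V →ₗ[𝕜] V →ₗ[𝕜] 𝕜) (τ : ι → V →ₗ[𝕜] 𝕜) (halt : ∀ i, (ω i).IsAlt)
    (hrank : finrank 𝕜 ↥(⨅ i, ker (ω i)) = Fintype.card ι)
    (hker : (⨅ i, ker (ω i)) ⊓ (⨅ i, ker (τ i)) = ⊥) (p : (ι → 𝕜) × V)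
    (hp : ∀ i q, extendedForm ω τ i p q = 0) : p = 0 := by
  classical
  obtain ⟨a, v⟩ := p
  have hτv : ∀ i, τ i v = 0 := fun i => by simpa [extendedForm] using hp i (Pi.single i 1, 0)
  have hωv : ∀ i w, ω i v w + a i * τ i w = 0 := fun i w => by
    simpa [extendedForm] using hp i (0, w)
  have ha : a = 0 := by
    funext i
    obtain ⟨⟨R, hR⟩, hRτ⟩ :=
      surjective_pi_domRestrict_of_inf_iInf_ker_eq_bot τ hrank hker (Pi.single i 1)
    have hRi : τ i R = 1 := by simpa using congrFun hRτ i
    have hωR : ω i v R = 0 :=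
      (halt i).isRefl.eq_zero (LinearMap.congr_fun ((Submodule.mem_iInf _).mp hR i) v)
    simpa [hωR, hRi] using hωv i R
  have hv : v ∈ (⨅ i, ker (ω i)) ⊓ (⨅ i, ker (τ i)) := by
    refine ⟨(Submodule.mem_iInf _).mpr fun i => ?_, (Submodule.mem_iInf _).mpr hτv⟩
    ext w
    simpa [ha] using hωv i w
  rw [hker, Submodule.mem_bot] at hv
  simp [ha, hv]

end

/-- Let `(M, τ, ω)` be a `k`-polycosymplectic manifold (encoded
fiberwise: components `τ^α = τ x α`, `ω^α = ω x α`, the distribution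
`⋂_α ker ω^α` has rank `k`, and `(⋂_α ker ω^α) ∩ (⋂_α ker τ^α) = 0`), and define
on `ℝᵏ × M` the `ℝᵏ`-valued 2-form `ω̃ = pr_M*ω + du ∧̄ pr_M*τ`, i.e.
componentwise and fiberwise
`ω̃^α((a,v),(b,w)) = ω^α(v,w) + a^α τ^α(w) − b^α τ^α(v)`. Then `ω̃` is a
`k`-polysymplectic form: (closedness being automatic from that of `τ` and `ω`)
it is nondegenerate, `⋂_{α=1}^k ker ω̃^α = 0` at every point. -/
theorem polycosymplectic_extension_polysymplectic
    {M V : Type*} [AddCommGroup V] [Module ℝ V] [FiniteDimensional ℝ V] {k : ℕ}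
    (ω : M → Fin k → V →ₗ[ℝ] V →ₗ[ℝ] ℝ) (τ : M → Fin k → V →ₗ[ℝ] ℝ)
    (halt : ∀ x α v, ω x α v v = 0)
    (hrank : ∀ x, Module.finrank ℝ ↥(⨅ α, LinearMap.ker (ω x α)) = k)
    (hker : ∀ x, (⨅ α, LinearMap.ker (ω x α)) ⊓ (⨅ α, LinearMap.ker (τ x α)) = ⊥) :
    ∀ (x : M) (p : (Fin k → ℝ) × V),
      (∀ (α : Fin k) (q : (Fin k → ℝ) × V),
        ω x α p.2 q.2 + p.1 α * τ x α q.2 - q.1 α * τ x α p.2 = 0) → p = 0 :=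
  fun x => eq_zero_of_forall_extendedForm_eq_zero (ω x) (τ x) (halt x)
    (by rw [hrank x, Fintype.card_fin]) (hker x)
end

section
/- Let (M, τ, ω) be a k-polycosymplectic manifold with Reeb vector fields R₁,…,R_k, let h ∈ C^∞(M), and let X^h = (X₁,…,X_k) be a k-polycosymplectic Hamiltonian k-vector field for h (so ι_{X^h}ω := Σ_α ι_{X_α}ω^α = dh − (R_α h)τ^α and τ^β(X_α) = δ^β_α). Define on ℝᵏ × M the function h̃(u, x) = h(x) − Σ_α u^α and the k-vector field X^{h̃} = X^h + (R_α h)∂/∂u^α. Then ι_{X^{h̃}} ω̃ = dh̃, where ω̃ = pr_M*ω + du ∧̄ pr_M*τ is the associated k-polysymplectic form on ℝᵏ × M. -/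
/-- Fiberwise encoding at a point of `M`: tangent vectors of `ℝᵏ × M` are pairs `(a, v)`,
`X̃_α = (Pi.single α (dh (r α)), X α)` with `r α` the Reeb vector `R_α`,
`ω̃^α((a,v),(b,w)) = ω^α(v,w) + a^α τ^α(w) − b^α τ^α(v)` and `dh̃(b,w) = dh(w) − ∑_α b^α`. -/
theorem extended_hamiltonian_k_vector_field_general
    {V : Type*} [AddCommGroup V] [Module ℝ V] {k : ℕ}
    (ω : Fin k → V →ₗ[ℝ] V →ₗ[ℝ] ℝ) (τ : Fin k → V →ₗ[ℝ] ℝ)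
    (dh : V →ₗ[ℝ] ℝ) (r : Fin k → V) (X : Fin k → V)
    (hX : ∑ α, ω α (X α) = dh - ∑ α, dh (r α) • τ α)
    (hτX : ∀ α β, τ β (X α) = if β = α then 1 else 0) :
    ∀ (b : Fin k → ℝ) (w : V),
      ∑ α, (ω α (X α) w + dh (r α) * τ α w - b α * τ α (X α))
        = dh w - ∑ α, b α := by
  intro b w
  have hXw : ∑ α, ω α (X α) w = dh w - ∑ α, dh (r α) * τ α w := by
    simpa [LinearMap.sum_apply] using LinearMap.congr_fun hX w
  have hτXα : ∀ α, τ α (X α) = 1 := fun α => by simp [hτX]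
  simp only [hτXα, mul_one, Finset.sum_sub_distrib, Finset.sum_add_distrib, hXw]
  ring

/-- Let `(M, τ, ω)` be a `k`-polycosymplectic manifold with Reeb
vector fields `R₁,…,R_k`, `h` a smooth function, and `X^h = (X₁,…,X_k)` a
`k`-polycosymplectic Hamiltonian `k`-vector field for `h`, i.e.
`∑_α ι_{X_α} ω^α = dh − ∑_α (R_α h) τ^α` and `τ^β(X_α) = δ^β_α`. On `ℝᵏ × M`
define `h̃(u,x) = h(x) − ∑_α u^α` and `X̃_α = X_α + (R_α h) ∂/∂u^α`. Then
`ι_{X^{h̃}} ω̃ = dh̃` for `ω̃ = pr_M*ω + du ∧̄ pr_M*τ`. Encoded fiberwise at a point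
`x`: tangent vectors of `ℝᵏ × M` are pairs `(a, v)`, the lifted vector field is
`X̃_α = (Pi.single α (dh(r α)), X α)`, `ω̃^α((a,v),(b,w)) = ω^α(v,w) + a^α τ^α(w)
− b^α τ^α(v)`, and `dh̃(b,w) = dh(w) − ∑_α b^α`; the claim is the equality of both
sides evaluated on every tangent vector `(b, w)`. -/
theorem extended_hamiltonian_k_vector_field
    {V : Type*} [AddCommGroup V] [Module ℝ V] {k : ℕ}
    (ω : Fin k → V →ₗ[ℝ] V →ₗ[ℝ] ℝ) (τ : Fin k → V →ₗ[ℝ] ℝ)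
    (dh : V →ₗ[ℝ] ℝ) (r : Fin k → V) (X : Fin k → V)
    (hrτ : ∀ α β, τ β (r α) = if β = α then 1 else 0)
    (hrω : ∀ α β, ω β (r α) = 0)
    (hX : ∑ α, ω α (X α) = dh - ∑ α, dh (r α) • τ α)
    (hτX : ∀ α β, τ β (X α) = if β = α then 1 else 0) :
    ∀ (b : Fin k → ℝ) (w : V),
      ∑ α, (ω α (X α) w + dh (r α) * τ α w - b α * τ α (X α))
        = dh w - ∑ α, b α :=
  extended_hamiltonian_k_vector_field_general ω τ dh r X hX hτX
end
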